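/- Rule get-write preserves the security condition: let b : Set (S × O × A), f1 : S → ℕ, f2 : O → ℕ, f3 : S → Set K, f4 : O → Set K, and suppose the state (b, f1, f2, f3, f4) satisfies the security condition. If s : S and o : O satisfy f2 o ≤ f1 s and f4 o ⊆ f3 s, then the state (b ∪ {(s, o, w)}, f1, f2, f3, f4) also satisfies the security condition. -/

import Mathlib

/-- The state `(b, f1, f2, f3, f4)` satisfies the security condition. -/
def SecCond {S O K A : Type*} (r w e a c : A) (b : Set (S × O × A))
    (f1 : S → ℕ) (f2 : O → ℕ) (f3 : S → Set K) (f4 : O → Set K) : Prop :=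
  ∀ s o x, (s, o, x) ∈ b →
    x = e ∨ x = a ∨ x = c ∨ ((x = r ∨ x = w) ∧ f2 o ≤ f1 s ∧ f4 o ⊆ f3 s)

section SecCond

variable {S O K A : Type*} {r w e a c : A} {f1 : S → ℕ} {f2 : O → ℕ} {f3 : S → Set K}
  {f4 : O → Set K}

theorem secCond_union_iff {b b' : Set (S × O × A)} :
    SecCond r w e a c (b ∪ b') f1 f2 f3 f4 ↔
      SecCond r w e a c b f1 f2 f3 f4 ∧ SecCond r w e a c b' f1 f2 f3 f4 :=
  ⟨fun h => ⟨fun s o x hx => h s o x (Or.inl hx), fun s o x hx => h s o x (Or.inr hx)⟩,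
    fun ⟨h, h'⟩ s o x hx => hx.elim (h s o x) (h' s o x)⟩

theorem secCond_singleton {s : S} {o : O} {x : A} (hx : x = r ∨ x = w)
    (h1 : f2 o ≤ f1 s) (h2 : f4 o ⊆ f3 s) :
    SecCond r w e a c {(s, o, x)} f1 f2 f3 f4 := by
  rintro s' o' x' hmem
  obtain ⟨rfl, rfl, rfl⟩ : s' = s ∧ o' = o ∧ x' = x := by simpa using hmem
  exact Or.inr (Or.inr (Or.inr ⟨hx, h1, h2⟩))

end SecCond

theorem getWrite_preserves_secCond_general {S O K A : Type*} (r w e a c : A)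
    (b : Set (S × O × A)) (f1 : S → ℕ) (f2 : O → ℕ) (f3 : S → Set K) (f4 : O → Set K)
    (hsec : SecCond r w e a c b f1 f2 f3 f4)
    (s : S) (o : O) (h1 : f2 o ≤ f1 s) (h2 : f4 o ⊆ f3 s) :
    SecCond r w e a c (b ∪ {(s, o, w)}) f1 f2 f3 f4 :=
  secCond_union_iff.2 ⟨hsec, secCond_singleton (Or.inr rfl) h1 h2⟩

/-- Rule get-write preserves the security condition. -/
theorem getWrite_preserves_secCond {S O K A : Type*} (r w e a c : A)
    (hdist : ([r, w, e, a, c] : List A).Pairwise (· ≠ ·))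
    (b : Set (S × O × A)) (f1 : S → ℕ) (f2 : O → ℕ) (f3 : S → Set K) (f4 : O → Set K)
    (hsec : SecCond r w e a c b f1 f2 f3 f4)
    (s : S) (o : O) (h1 : f2 o ≤ f1 s) (h2 : f4 o ⊆ f3 s) :
    SecCond r w e a c (b ∪ {(s, o, w)}) f1 f2 f3 f4 :=
  getWrite_preserves_secCond_general r w e a c b f1 f2 f3 f4 hsec s o h1 h2
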